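/- arXiv:math/0603321 — 2 statements merged into one kernel-verified Lean document; each statement's English description precedes it below -/
import Mathlib

section
/- Let s ≥ 1 and P a regular Newton polyhedron. If g ∈ G^{s,q}(Ω) (anisotropic Gevrey class with q = (μ/μ₁,…,μ/μₙ)) and f ∈ G^{s,P}(Ω), then the product gf belongs to G^{s,P}(Ω). -/
/-- Partial derivative in the `j`-th coordinate direction. -/
noncomputable def pderivR (n : ℕ) (j : Fin n) (u : (Fin n → ℝ) → ℝ) : (Fin n → ℝ) → ℝ :=
  fun x => fderiv ℝ u x (Pi.single j 1)

/-- Multi-index derivative `D^α u`. -/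
noncomputable def mderivR (n : ℕ) (α : Fin n → ℕ) (u : (Fin n → ℝ) → ℝ) :
    (Fin n → ℝ) → ℝ :=
  (List.finRange n).foldr (fun j v => (pderivR n j)^[α j] v) u

/-- `k(α) = max_{a∈A} ⟨α,a⟩`. -/
noncomputable def kP (n : ℕ) (A : Finset (Fin n → ℝ)) (hA : A.Nonempty)
    (α : Fin n → ℕ) : ℝ :=
  A.sup' hA fun a => ∑ j, (α j : ℝ) * a j

/-- `μ_j = max_{a ∈ A} a_j⁻¹`. -/
noncomputable def muJ (n : ℕ) (A : Finset (Fin n → ℝ)) (hA : A.Nonempty) (j : Fin n) : ℝ :=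
  A.sup' hA fun a => (a j)⁻¹

/-- `μ = max_j μ_j`. -/
noncomputable def muP (n : ℕ) (hn : (Finset.univ : Finset (Fin n)).Nonempty)
    (A : Finset (Fin n → ℝ)) (hA : A.Nonempty) : ℝ :=
  Finset.univ.sup' hn fun j => muJ n A hA j

open Finset

section infra

variable {n : ℕ} {Ω : Set (Fin n → ℝ)}

lemma diffAt (hΩ : IsOpen Ω) {u : (Fin n → ℝ) → ℝ} (hu : ContDiffOn ℝ (⊤ : ℕ∞) u Ω)
    {x : Fin n → ℝ} (hx : x ∈ Ω) : DifferentiableAt ℝ u x :=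
  (hu.contDiffAt (hΩ.mem_nhds hx)).differentiableAt (by simp)

lemma pderivR_congr (hΩ : IsOpen Ω) {u v : (Fin n → ℝ) → ℝ} (h : Set.EqOn u v Ω)
    {x : Fin n → ℝ} (hx : x ∈ Ω) (j : Fin n) : pderivR n j u x = pderivR n j v x := by
  unfold pderivR
  rw [Filter.EventuallyEq.fderiv_eq (Filter.eventuallyEq_of_mem (hΩ.mem_nhds hx) h)]

lemma pderivR_iter_congr (hΩ : IsOpen Ω) {u v : (Fin n → ℝ) → ℝ} (h : Set.EqOn u v Ω)
    (j : Fin n) (k : ℕ) :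
    Set.EqOn ((pderivR n j)^[k] u) ((pderivR n j)^[k] v) Ω := by
  induction k with
  | zero => exact h
  | succ k ih =>
    intro x hx
    rw [Function.iterate_succ_apply', Function.iterate_succ_apply']
    exact pderivR_congr hΩ ih hx j

lemma pderivR_contDiffOn (hΩ : IsOpen Ω) {u : (Fin n → ℝ) → ℝ} (hu : ContDiffOn ℝ (⊤ : ℕ∞) u Ω)
    (j : Fin n) : ContDiffOn ℝ (⊤ : ℕ∞) (pderivR n j u) Ω :=
  (hu.fderiv_of_isOpen hΩ (by simp)).clm_apply contDiffOn_const

lemma pderivR_iter_contDiffOn (hΩ : IsOpen Ω) {u : (Fin n → ℝ) → ℝ}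
    (hu : ContDiffOn ℝ (⊤ : ℕ∞) u Ω) (j : Fin n) (k : ℕ) :
    ContDiffOn ℝ (⊤ : ℕ∞) ((pderivR n j)^[k] u) Ω := by
  induction k with
  | zero => exact hu
  | succ k ih =>
    rw [Function.iterate_succ_apply']
    exact pderivR_contDiffOn hΩ ih j

lemma pderivR_mul (hΩ : IsOpen Ω) {u v : (Fin n → ℝ) → ℝ} (hu : ContDiffOn ℝ (⊤ : ℕ∞) u Ω)
    (hv : ContDiffOn ℝ (⊤ : ℕ∞) v Ω) {x : Fin n → ℝ} (hx : x ∈ Ω) (j : Fin n) :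
    pderivR n j (fun y => u y * v y) x = pderivR n j u x * v x + u x * pderivR n j v x := by
  unfold pderivR
  rw [fderiv_fun_mul (diffAt hΩ hu hx) (diffAt hΩ hv hx)]
  simp only [ContinuousLinearMap.add_apply, ContinuousLinearMap.smul_apply, smul_eq_mul]
  ring

lemma pderivR_sum (hΩ : IsOpen Ω) {ι : Type*} (s : Finset ι) (G : ι → (Fin n → ℝ) → ℝ)
    (hG : ∀ b ∈ s, ContDiffOn ℝ (⊤ : ℕ∞) (G b) Ω) {x : Fin n → ℝ} (hx : x ∈ Ω) (j : Fin n) :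
    pderivR n j (fun y => ∑ b ∈ s, G b y) x = ∑ b ∈ s, pderivR n j (G b) x := by
  unfold pderivR
  rw [fderiv_fun_sum fun b hb => diffAt hΩ (hG b hb) hx]
  simp

lemma pderivR_const_mul (hΩ : IsOpen Ω) {u : (Fin n → ℝ) → ℝ} (hu : ContDiffOn ℝ (⊤ : ℕ∞) u Ω)
    {x : Fin n → ℝ} (hx : x ∈ Ω) (c : ℝ) (j : Fin n) :
    pderivR n j (fun y => c * u y) x = c * pderivR n j u x := by
  unfold pderivR
  rw [fderiv_const_mul (diffAt hΩ hu hx) c]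
  simp

lemma pderivR_iter_sum (hΩ : IsOpen Ω) {ι : Type*} (s : Finset ι) (G : ι → (Fin n → ℝ) → ℝ)
    (hG : ∀ b ∈ s, ContDiffOn ℝ (⊤ : ℕ∞) (G b) Ω) (j : Fin n) (k : ℕ) :
    Set.EqOn ((pderivR n j)^[k] (fun y => ∑ b ∈ s, G b y))
      (fun y => ∑ b ∈ s, (pderivR n j)^[k] (G b) y) Ω := by
  induction k with
  | zero => intro x hx; simp
  | succ k ih =>
    intro x hx
    rw [Function.iterate_succ_apply', pderivR_congr hΩ ih hx j,
      pderivR_sum hΩ s _ (fun b hb => pderivR_iter_contDiffOn hΩ (hG b hb) j k) hx j]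
    simp [Function.iterate_succ_apply']

lemma pderivR_iter_const_mul (hΩ : IsOpen Ω) {u : (Fin n → ℝ) → ℝ} (hu : ContDiffOn ℝ (⊤ : ℕ∞) u Ω)
    (c : ℝ) (j : Fin n) (k : ℕ) :
    Set.EqOn ((pderivR n j)^[k] (fun y => c * u y)) (fun y => c * (pderivR n j)^[k] u y) Ω := by
  induction k with
  | zero => intro x hx; simp
  | succ k ih =>
    intro x hx
    rw [Function.iterate_succ_apply', pderivR_congr hΩ ih hx j,
      pderivR_const_mul hΩ (pderivR_iter_contDiffOn hΩ hu j k) hx c j,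
      Function.iterate_succ_apply']

end infra

lemma choose_sum_step (a b : ℕ → ℝ) (k : ℕ) :
    ∑ i ∈ range (k + 2), ((k + 1).choose i : ℝ) * (a i * b (k + 1 - i))
      = ∑ i ∈ range (k + 1), (k.choose i : ℝ) *
          (a (i + 1) * b (k - i) + a i * b (k + 1 - i)) := by
  have h1 : ∑ i ∈ range (k + 2), ((k + 1).choose i : ℝ) * (a i * b (k + 1 - i))
      = ∑ i ∈ range (k + 1), ((k + 1).choose (i + 1) : ℝ) * (a (i + 1) * b (k - i))
        + a 0 * b (k + 1) := by
    rw [Finset.sum_range_succ' (fun i => ((k + 1).choose i : ℝ) * (a i * b (k + 1 - i))) (k + 1)]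
    simp
  have h3 : ∑ i ∈ range (k + 1), ((k.choose (i + 1) : ℝ)) * (a (i + 1) * b (k - i))
        + a 0 * b (k + 1)
      = ∑ i ∈ range (k + 1), (k.choose i : ℝ) * (a i * b (k + 1 - i)) := by
    rw [Finset.sum_range_succ' (fun i => (k.choose i : ℝ) * (a i * b (k + 1 - i))) k,
      Finset.sum_range_succ (fun i => ((k.choose (i + 1) : ℝ)) * (a (i + 1) * b (k - i))) k,
      Nat.choose_succ_self]
    push_cast
    simp [Nat.succ_sub_succ]
  calc ∑ i ∈ range (k + 2), ((k + 1).choose i : ℝ) * (a i * b (k + 1 - i))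
      = ∑ i ∈ range (k + 1), ((k.choose i : ℝ) * (a (i + 1) * b (k - i))
            + (k.choose (i + 1) : ℝ) * (a (i + 1) * b (k - i)))
        + a 0 * b (k + 1) := by
          rw [h1]
          congr 1
          apply Finset.sum_congr rfl
          intro i _
          rw [Nat.choose_succ_succ']
          push_cast
          ring
    _ = ∑ i ∈ range (k + 1), (k.choose i : ℝ) * (a (i + 1) * b (k - i))
        + (∑ i ∈ range (k + 1), ((k.choose (i + 1) : ℝ)) * (a (i + 1) * b (k - i))
            + a 0 * b (k + 1)) := by rw [Finset.sum_add_distrib, add_assoc]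
    _ = ∑ i ∈ range (k + 1), (k.choose i : ℝ) * (a (i + 1) * b (k - i))
        + ∑ i ∈ range (k + 1), (k.choose i : ℝ) * (a i * b (k + 1 - i)) := by rw [h3]
    _ = _ := by rw [← Finset.sum_add_distrib]; exact Finset.sum_congr rfl fun i _ => by ring

section leib
variable {n : ℕ} {Ω : Set (Fin n → ℝ)}

lemma pderivR_iter_leibniz (hΩ : IsOpen Ω) {u v : (Fin n → ℝ) → ℝ}
    (hu : ContDiffOn ℝ (⊤ : ℕ∞) u Ω) (hv : ContDiffOn ℝ (⊤ : ℕ∞) v Ω) (j : Fin n) (k : ℕ) :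
    ∀ x ∈ Ω, (pderivR n j)^[k] (fun y => u y * v y) x
      = ∑ i ∈ range (k + 1), (k.choose i : ℝ) *
          ((pderivR n j)^[i] u x * (pderivR n j)^[k - i] v x) := by
  induction k with
  | zero => intro x hx; simp
  | succ k ih =>
    intro x hx
    rw [Function.iterate_succ_apply']
    rw [pderivR_congr hΩ (fun y hy => ih y hy) hx j]
    rw [pderivR_sum hΩ (range (k + 1))
      (fun i => fun y => (k.choose i : ℝ) * ((pderivR n j)^[i] u y * (pderivR n j)^[k - i] v y))
      (fun i _ => contDiffOn_const.mul
        ((pderivR_iter_contDiffOn hΩ hu j i).mul (pderivR_iter_contDiffOn hΩ hv j (k - i))))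
      hx j]
    have hterm : ∀ i ∈ range (k + 1),
        pderivR n j
          (fun y => (k.choose i : ℝ) * ((pderivR n j)^[i] u y * (pderivR n j)^[k - i] v y)) x
        = (k.choose i : ℝ) * ((pderivR n j)^[i + 1] u x * (pderivR n j)^[k - i] v x
            + (pderivR n j)^[i] u x * (pderivR n j)^[k - i + 1] v x) := by
      intro i _
      rw [pderivR_const_mul hΩ
        ((pderivR_iter_contDiffOn hΩ hu j i).mul (pderivR_iter_contDiffOn hΩ hv j (k - i))) hx _ j]
      rw [pderivR_mul hΩ (pderivR_iter_contDiffOn hΩ hu j i)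
        (pderivR_iter_contDiffOn hΩ hv j (k - i)) hx j]
      rw [← Function.iterate_succ_apply' (pderivR n j) i u,
        ← Function.iterate_succ_apply' (pderivR n j) (k - i) v]
    rw [Finset.sum_congr rfl hterm]
    have := choose_sum_step (fun i => (pderivR n j)^[i] u x) (fun i => (pderivR n j)^[i] v x) k
    rw [show k + 1 + 1 = k + 2 from rfl, this]
    apply Finset.sum_congr rfl
    intro i hi
    rw [Finset.mem_range] at hi
    have : k + 1 - i = k - i + 1 := by omega
    rw [this]

end leib

section wrappers
variable {n : ℕ} {Ω : Set (Fin n → ℝ)}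

lemma pderivR_iter_sum' (hΩ : IsOpen Ω) {ι : Type*} (s : Finset ι) (G : ι → (Fin n → ℝ) → ℝ)
    (hG : ∀ b ∈ s, ContDiffOn ℝ (⊤ : ℕ∞) (G b) Ω) (j : Fin n) (k : ℕ) {x : Fin n → ℝ} (hx : x ∈ Ω) :
    (pderivR n j)^[k] (fun y => ∑ b ∈ s, G b y) x = ∑ b ∈ s, (pderivR n j)^[k] (G b) x :=
  pderivR_iter_sum hΩ s G hG j k hx

lemma pderivR_iter_const_mul' (hΩ : IsOpen Ω) {u : (Fin n → ℝ) → ℝ} (hu : ContDiffOn ℝ (⊤ : ℕ∞) u Ω)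
    (c : ℝ) (j : Fin n) (k : ℕ) {x : Fin n → ℝ} (hx : x ∈ Ω) :
    (pderivR n j)^[k] (fun y => c * u y) x = c * (pderivR n j)^[k] u x :=
  pderivR_iter_const_mul hΩ hu c j k hx

end wrappers

noncomputable def mderivL (n : ℕ) (L : List (Fin n)) (α : Fin n → ℕ)
    (u : (Fin n → ℝ) → ℝ) : (Fin n → ℝ) → ℝ :=
  L.foldr (fun j v => (pderivR n j)^[α j] v) u

section fold
variable {n : ℕ} {Ω : Set (Fin n → ℝ)}

lemma mderivL_nil (α : Fin n → ℕ) (u : (Fin n → ℝ) → ℝ) : mderivL n [] α u = u := rfl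

lemma mderivL_cons (j : Fin n) (L : List (Fin n)) (α : Fin n → ℕ) (u : (Fin n → ℝ) → ℝ) :
    mderivL n (j :: L) α u = (pderivR n j)^[α j] (mderivL n L α u) := rfl

lemma mderivL_congr_index (L : List (Fin n)) {α α' : Fin n → ℕ}
    (h : ∀ j ∈ L, α j = α' j) (u : (Fin n → ℝ) → ℝ) :
    mderivL n L α u = mderivL n L α' u := by
  induction L with
  | nil => rfl
  | cons j L ih =>
    rw [mderivL_cons, mderivL_cons, ih (fun l hl => h l (List.mem_cons_of_mem j hl)),
      h j List.mem_cons_self]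

lemma mderivL_contDiffOn (hΩ : IsOpen Ω) (L : List (Fin n)) (α : Fin n → ℕ)
    {u : (Fin n → ℝ) → ℝ} (hu : ContDiffOn ℝ (⊤ : ℕ∞) u Ω) :
    ContDiffOn ℝ (⊤ : ℕ∞) (mderivL n L α u) Ω := by
  induction L with
  | nil => exact hu
  | cons j L ih => exact pderivR_iter_contDiffOn hΩ ih j (α j)

lemma mderivL_leibniz (hΩ : IsOpen Ω) {u v : (Fin n → ℝ) → ℝ}
    (hu : ContDiffOn ℝ (⊤ : ℕ∞) u Ω) (hv : ContDiffOn ℝ (⊤ : ℕ∞) v Ω) :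
    ∀ L : List (Fin n), L.Nodup → ∀ α : Fin n → ℕ, (∀ j, j ∉ L → α j = 0) →
    ∀ x ∈ Ω, mderivL n L α (fun y => u y * v y) x =
      ∑ β ∈ Fintype.piFinset (fun j => Finset.range (α j + 1)),
        (∏ j, ((α j).choose (β j) : ℝ)) * (mderivL n L β u x * mderivL n L (α - β) v x) := by
  intro L
  induction L with
  | nil =>
    intro _ α hα x hx
    have hα0 : α = fun _ => 0 := funext fun j => hα j List.not_mem_nil
    subst hα0
    rw [show (Fintype.piFinset fun j : Fin n => Finset.range (0 + 1))
        = {fun _ => 0} from by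
      ext β
      simp [Fintype.mem_piFinset, Finset.eq_singleton_iff_unique_mem, funext_iff,
        Nat.lt_one_iff]]
    simp [mderivL_nil]
  | cons j L ih =>
    intro hnd α hα x hx
    have hjL : j ∉ L := (List.nodup_cons.1 hnd).1
    have hndL : L.Nodup := (List.nodup_cons.1 hnd).2
    have hneq : ∀ l ∈ L, l ≠ j := fun l hl h => hjL (by rwa [h] at hl)
    set α' := Function.update α j 0 with hα'
    have hαα' : ∀ l ∈ L, α l = α' l := fun l hl =>
      (Function.update_of_ne (hneq l hl) 0 α).symm
    have hα'supp : ∀ l, l ∉ L → α' l = 0 := by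
      intro l hl
      by_cases hlj : l = j
      · subst hlj; simp [hα']
      · rw [hα', Function.update_of_ne hlj]
        exact hα l (by simp [hlj, hl])
    have hinner : Set.EqOn (mderivL n L α (fun y => u y * v y))
        (fun y => ∑ β ∈ Fintype.piFinset (fun l => Finset.range (α' l + 1)),
          (∏ l, ((α' l).choose (β l) : ℝ)) *
            (mderivL n L β u y * mderivL n L (α' - β) v y)) Ω := by
      intro y hy
      rw [mderivL_congr_index L hαα' (fun y => u y * v y)]
      exact ih hndL α' hα'supp y hy
    rw [mderivL_cons, pderivR_iter_congr hΩ hinner j (α j) hx]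
    rw [pderivR_iter_sum' hΩ _
      (fun β => fun y => (∏ l, ((α' l).choose (β l) : ℝ)) *
          (mderivL n L β u y * mderivL n L (α' - β) v y))
      (fun β _ => contDiffOn_const.mul
        ((mderivL_contDiffOn hΩ L β hu).mul (mderivL_contDiffOn hΩ L (α' - β) hv)))
      j (α j) hx]
    have hterm : ∀ β ∈ Fintype.piFinset (fun l => Finset.range (α' l + 1)),
        (pderivR n j)^[α j] (fun y => (∏ l, ((α' l).choose (β l) : ℝ)) *
            (mderivL n L β u y * mderivL n L (α' - β) v y)) x
        = ∑ i ∈ range (α j + 1), (∏ l, ((α' l).choose (β l) : ℝ)) * ((α j).choose i : ℝ) *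
            (mderivL n (j :: L) (Function.update β j i) u x *
              mderivL n (j :: L) (α - Function.update β j i) v x) := by
      intro β hβ
      rw [pderivR_iter_const_mul' hΩ
        ((mderivL_contDiffOn hΩ L β hu).mul (mderivL_contDiffOn hΩ L (α' - β) hv)) _ j (α j) hx]
      rw [pderivR_iter_leibniz hΩ (mderivL_contDiffOn hΩ L β hu)
        (mderivL_contDiffOn hΩ L (α' - β) hv) j (α j) x hx]
      rw [Finset.mul_sum]
      apply Finset.sum_congr rfl
      intro i hi
      have h1 : mderivL n (j :: L) (Function.update β j i) u
          = (pderivR n j)^[i] (mderivL n L β u) := by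
        rw [mderivL_cons, Function.update_self,
          mderivL_congr_index L (fun l hl => Function.update_of_ne (hneq l hl) i β) u]
      have h2 : α - Function.update β j i = Function.update (α' - β) j (α j - i) := by
        funext l
        by_cases hlj : l = j
        · subst hlj; simp [Pi.sub_apply, Function.update_self]
        · simp [Pi.sub_apply, Function.update_of_ne hlj, hα']
      have h3 : mderivL n (j :: L) (α - Function.update β j i) v
          = (pderivR n j)^[α j - i] (mderivL n L (α' - β) v) := by
        rw [h2, mderivL_cons, Function.update_self,
          mderivL_congr_index L
            (fun l hl => Function.update_of_ne (hneq l hl) (α j - i) (α' - β)) v]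
      rw [h1, h3]
      ring
    rw [Finset.sum_congr rfl hterm]
    rw [← Finset.sum_product']
    refine Finset.sum_nbij'
      (i := fun p => Function.update p.1 j p.2)
      (j := fun β => (Function.update β j 0, β j)) ?_ ?_ ?_ ?_ ?_
    · intro p hp
      rw [Finset.mem_product] at hp
      obtain ⟨hp1, hp2⟩ := hp
      rw [Fintype.mem_piFinset]
      intro l
      by_cases hlj : l = j
      · subst hlj; simpa [Function.update_self] using hp2
      · rw [Function.update_of_ne hlj]
        have := (Fintype.mem_piFinset.1 hp1) l
        rwa [hα', Function.update_of_ne hlj] at this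
    · intro β hβ
      rw [Finset.mem_product]
      constructor
      · rw [Fintype.mem_piFinset]
        intro l
        dsimp only
        by_cases hlj : l = j
        · subst hlj; simp [hα']
        · rw [Function.update_of_ne hlj, hα', Function.update_of_ne hlj]
          exact (Fintype.mem_piFinset.1 hβ) l
      · exact (Fintype.mem_piFinset.1 hβ) j
    · intro p hp
      rw [Finset.mem_product] at hp
      have hpj : p.1 j = 0 := by
        have := (Fintype.mem_piFinset.1 hp.1) j
        simp [hα'] at this
        omega
      have h1 : Function.update (Function.update p.1 j p.2) j 0 = p.1 := by
        funext l
        by_cases hlj : l = j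
        · subst hlj; simp [Function.update_self, hpj]
        · simp [Function.update_of_ne hlj]
      have h2 : Function.update p.1 j p.2 j = p.2 := Function.update_self j p.2 p.1
      rw [Prod.ext_iff]
      exact ⟨h1, h2⟩
    · intro β hβ
      dsimp only
      funext l
      by_cases hlj : l = j
      · subst hlj; simp [Function.update_self]
      · simp [Function.update_of_ne hlj]
    · intro p hp
      rw [Finset.mem_product] at hp
      have hpj : p.1 j = 0 := by
        have := (Fintype.mem_piFinset.1 hp.1) j
        simp [hα'] at this
        omega
      have hsplit : ∀ F : Fin n → ℝ, ∏ l, F l = F j * ∏ l ∈ Finset.univ.erase j, F l :=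
        fun F => (Finset.mul_prod_erase Finset.univ F (Finset.mem_univ j)).symm
      have hcoef : (∏ l, ((α l).choose (Function.update p.1 j p.2 l) : ℝ))
          = (∏ l, ((α' l).choose (p.1 l) : ℝ)) * ((α j).choose p.2 : ℝ) := by
        rw [hsplit (fun l => ((α l).choose (Function.update p.1 j p.2 l) : ℝ)),
          hsplit (fun l => ((α' l).choose (p.1 l) : ℝ))]
        have hj0 : ((α' j).choose (p.1 j) : ℝ) = 1 := by simp [hα', hpj]
        rw [hj0, one_mul, Function.update_self, mul_comm]
        congr 1
        apply Finset.prod_congr rfl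
        intro l hl
        have hlj : l ≠ j := (Finset.mem_erase.1 hl).1
        rw [Function.update_of_ne hlj, hα', Function.update_of_ne hlj]
      rw [hcoef]
end fold

lemma max_one_rpow_le (x c : ℝ) (hx : 0 ≤ x) (hc : 0 ≤ c) :
    (max 1 x) ^ (c * x) ≤ Real.exp (c / Real.exp 1) * x ^ (c * x) := by
  rcases le_or_gt 1 x with h1 | h1
  · rw [max_eq_right h1]
    have h2 : (0:ℝ) ≤ x ^ (c * x) := Real.rpow_nonneg hx _
    nlinarith [Real.one_le_exp (div_nonneg hc (Real.exp_pos 1).le)]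
  · rw [max_eq_left h1.le, Real.one_rpow]
    rcases eq_or_lt_of_le hx with h0 | h0
    · rw [← h0, show c * 0 = 0 by ring, Real.rpow_zero, mul_one]
      exact Real.one_le_exp (div_nonneg hc (Real.exp_pos 1).le)
    · have hlog := Real.log_le_sub_one_of_pos (x := (Real.exp 1 * x)⁻¹) (by positivity)
      rw [Real.log_inv, Real.log_mul (Real.exp_ne_zero 1) (ne_of_gt h0), Real.log_exp] at hlog
      have h2 : -Real.log x ≤ (Real.exp 1 * x)⁻¹ := by linarith
      have h3 : (-Real.log x) * (c * x) ≤ (Real.exp 1 * x)⁻¹ * (c * x) :=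
        mul_le_mul_of_nonneg_right h2 (by positivity)
      have h4 : (Real.exp 1 * x)⁻¹ * (c * x) = c / Real.exp 1 := by
        field_simp
      rw [Real.rpow_def_of_pos h0, ← Real.exp_add]
      apply Real.one_le_exp
      nlinarith


/-- if `g ∈ G^{s,q}(Ω)` (anisotropic Gevrey class, `q_j = μ/μ_j`) and
`f ∈ G^{s,P}(Ω)`, then the product `g·f ∈ G^{s,P}(Ω)`. -/
theorem gevrey_product (n : ℕ) (hn : (Finset.univ : Finset (Fin n)).Nonempty)
    (s : ℝ) (hs : 1 ≤ s)
    (A : Finset (Fin n → ℝ)) (hA : A.Nonempty) (hpos : ∀ a ∈ A, ∀ j, 0 < a j)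
    (Ω : Set (Fin n → ℝ)) (hΩ : IsOpen Ω)
    (g f : (Fin n → ℝ) → ℝ) (hg : ContDiffOn ℝ (⊤ : ℕ∞) g Ω) (hf : ContDiffOn ℝ (⊤ : ℕ∞) f Ω)
    (hGg : ∀ K : Set (Fin n → ℝ), K ⊆ Ω → IsCompact K → ∃ C : ℝ, 0 < C ∧
      ∀ α : Fin n → ℕ, ∀ x ∈ K,
        |mderivR n α g x| ≤ C ^ (∑ j, α j + 1) *
          ∏ j, ((Nat.factorial (α j) : ℝ)) ^ (muP n hn A hA / muJ n A hA j))
    (hGf : ∀ K : Set (Fin n → ℝ), K ⊆ Ω → IsCompact K → ∃ C : ℝ, 0 < C ∧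
      ∀ α : Fin n → ℕ, ∀ x ∈ K,
        |mderivR n α f x| ≤ C ^ (∑ j, α j + 1) *
          kP n A hA α ^ (s * muP n hn A hA * kP n A hA α)) :
    ∀ K : Set (Fin n → ℝ), K ⊆ Ω → IsCompact K → ∃ C : ℝ, 0 < C ∧
      ∀ α : Fin n → ℕ, ∀ x ∈ K,
        |mderivR n α (fun y => g y * f y) x| ≤ C ^ (∑ j, α j + 1) *
          kP n A hA α ^ (s * muP n hn A hA * kP n A hA α) := by
  intro K hKΩ hK
  obtain ⟨Cg, hCg0, hCgb⟩ := hGg K hKΩ hK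
  obtain ⟨Cf, hCf0, hCfb⟩ := hGf K hKΩ hK
  obtain ⟨a₀, ha₀⟩ := id hA
  obtain ⟨j₀, -⟩ := id hn
  set μ := muP n hn A hA with hμdef
  -- basic positivity facts
  have hmuJ_pos : ∀ j, 0 < muJ n A hA j := fun j =>
    lt_of_lt_of_le (inv_pos.2 (hpos a₀ ha₀ j)) (Finset.le_sup' (f := fun a => (a j)⁻¹) ha₀)
  have hmu_pos : 0 < μ := lt_of_lt_of_le (hmuJ_pos j₀) (Finset.le_sup' (f := fun j => muJ n A hA j) (Finset.mem_univ j₀))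
  have hq1 : ∀ j, 1 ≤ μ / muJ n A hA j := fun j =>
    (one_le_div (hmuJ_pos j)).2 (Finset.le_sup' (f := fun j => muJ n A hA j) (Finset.mem_univ j))
  have hq0 : ∀ j, 0 ≤ μ / muJ n A hA j := fun j => le_trans zero_le_one (hq1 j)
  have hinv_le : ∀ a ∈ A, ∀ j, (muJ n A hA j)⁻¹ ≤ a j := by
    intro a ha j
    rw [← inv_inv (a j)]
    exact inv_anti₀ (inv_pos.2 (hpos a ha j)) (Finset.le_sup' (f := fun a => (a j)⁻¹) ha)
  have hkP_nonneg : ∀ β : Fin n → ℕ, 0 ≤ kP n A hA β := fun β =>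
    le_trans (Finset.sum_nonneg fun j _ => mul_nonneg (Nat.cast_nonneg _) (hpos a₀ ha₀ j).le)
      (Finset.le_sup' (f := fun a => ∑ j, (β j : ℝ) * a j) ha₀)
  have hkP_mono : ∀ β γ : Fin n → ℕ, (∀ j, β j ≤ γ j) → kP n A hA β ≤ kP n A hA γ := by
    intro β γ h
    apply Finset.sup'_le
    intro a ha
    exact le_trans (Finset.sum_le_sum fun j _ =>
      mul_le_mul_of_nonneg_right (Nat.cast_le.2 (h j)) (hpos a ha j).le)
      (Finset.le_sup' (f := fun a => ∑ j, (γ j : ℝ) * a j) ha)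
  set mI : (Fin n → ℕ) → ℝ := fun β => A.inf' ⟨a₀, ha₀⟩ fun a => ∑ j, (β j : ℝ) * a j
    with hmIdef
  have hmI_nonneg : ∀ β, 0 ≤ mI β := by
    intro β
    apply Finset.le_inf'
    intro a ha
    exact Finset.sum_nonneg fun j _ => mul_nonneg (Nat.cast_nonneg _) (hpos a ha j).le
  have hmI_le_kP : ∀ β, mI β ≤ kP n A hA β := fun β =>
    le_trans (Finset.inf'_le _ ha₀) (Finset.le_sup' (f := fun a => ∑ j, (β j : ℝ) * a j) ha₀)
  have hkeysum : ∀ β : Fin n → ℕ, ∑ j, (β j : ℝ) * (μ / muJ n A hA j) ≤ μ * mI β := by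
    intro β
    obtain ⟨a', ha', he⟩ := Finset.exists_mem_eq_inf' ⟨a₀, ha₀⟩ (fun a => ∑ j, (β j : ℝ) * a j)
    rw [hmIdef]
    simp only
    rw [he, Finset.mul_sum]
    apply Finset.sum_le_sum
    intro j _
    have h1 := hinv_le a' ha' j
    have h2 : (0:ℝ) ≤ (β j : ℝ) := Nat.cast_nonneg _
    have h3 : 0 < muJ n A hA j := hmuJ_pos j
    rw [div_eq_mul_inv]
    nlinarith [mul_le_mul_of_nonneg_left h1 (mul_nonneg hmu_pos.le h2)]
  have hkeysplit : ∀ α β : Fin n → ℕ, (∀ j, β j ≤ α j) →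
      mI β + kP n A hA (α - β) ≤ kP n A hA α := by
    intro α β hβ
    obtain ⟨a', ha', he⟩ := Finset.exists_mem_eq_sup' ⟨a₀, ha₀⟩
      (fun a => ∑ j, ((α - β) j : ℝ) * a j)
    have h1 : mI β ≤ ∑ j, (β j : ℝ) * a' j := Finset.inf'_le _ ha'
    have h2 : (∑ j, (β j : ℝ) * a' j) + (∑ j, ((α - β) j : ℝ) * a' j)
        = ∑ j, (α j : ℝ) * a' j := by
      rw [← Finset.sum_add_distrib]
      apply Finset.sum_congr rfl
      intro j _
      have : ((α - β) j : ℝ) = (α j : ℝ) - (β j : ℝ) := by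
        simp only [Pi.sub_apply]
        rw [Nat.cast_sub (hβ j)]
      rw [this]
      ring
    have h3 : ∑ j, (α j : ℝ) * a' j ≤ kP n A hA α := Finset.le_sup' (f := fun a => ∑ j, (α j : ℝ) * a j) ha'
    rw [show kP n A hA (α - β) = ∑ j, ((α - β) j : ℝ) * a' j from he]
    linarith
  -- global constants
  set Λ : ℝ := max 1 (A.sup' ⟨a₀, ha₀⟩ fun a => Finset.univ.sup' ⟨j₀, Finset.mem_univ j₀⟩
    fun j => a j) with hΛdef
  have hΛ1 : 1 ≤ Λ := le_max_left _ _
  have haΛ : ∀ a ∈ A, ∀ j, a j ≤ Λ := by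
    intro a ha j
    refine le_trans (le_trans (Finset.le_sup' (fun j => a j) (Finset.mem_univ j)) ?_)
      (le_max_right _ _)
    exact Finset.le_sup' (f := fun a => Finset.univ.sup' ⟨j₀, Finset.mem_univ j₀⟩ fun j => a j) ha
  have hkPle : ∀ β : Fin n → ℕ, kP n A hA β ≤ Λ * ∑ j, (β j : ℝ) := by
    intro β
    apply Finset.sup'_le
    intro a ha
    calc ∑ j, (β j : ℝ) * a j ≤ ∑ j, (β j : ℝ) * Λ :=
          Finset.sum_le_sum fun j _ => mul_le_mul_of_nonneg_left (haΛ a ha j) (Nat.cast_nonneg _)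
      _ = Λ * ∑ j, (β j : ℝ) := by rw [← Finset.sum_mul, mul_comm]
  set E : ℝ := (max 1 μ) ^ (μ * Λ) with hEdef
  have hE1 : 1 ≤ E := by
    have h := Real.rpow_le_rpow_of_exponent_le (x := max 1 μ) (le_max_left _ _)
      (mul_nonneg hmu_pos.le (le_trans zero_le_one hΛ1) : (0:ℝ) ≤ μ * Λ)
    rwa [Real.rpow_zero] at h
  set ExpV : ℝ := Real.exp (s * μ / Real.exp 1) with hExpdef
  have hExp1 : 1 ≤ ExpV :=
    Real.one_le_exp (div_nonneg (mul_nonneg (le_trans zero_le_one hs) hmu_pos.le)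
      (Real.exp_pos 1).le)
  set Cg' : ℝ := max 1 Cg with hCg'def
  set Cf' : ℝ := max 1 Cf with hCf'def
  refine ⟨2 * Cg' * Cf' * E * ExpV, by positivity, ?_⟩
  intro α x hxK
  have hxΩ : x ∈ Ω := hKΩ hxK
  set N : ℕ := (∑ j, α j) + 1 with hNdef
  -- the core arithmetic estimate, for each β ≤ α
  have hcore : ∀ β : Fin n → ℕ, (∀ j, β j ≤ α j) →
      (∏ j, ((β j).factorial : ℝ) ^ (μ / muJ n A hA j)) *
        kP n A hA (α - β) ^ (s * μ * kP n A hA (α - β))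
      ≤ E ^ (∑ j, α j) * (ExpV * kP n A hA α ^ (s * μ * kP n A hA α)) := by
    intro β hβle
    have hM1 : (1:ℝ) ≤ max 1 (kP n A hA α) := le_max_left _ _
    have hM0 : (0:ℝ) < max 1 (kP n A hA α) := lt_of_lt_of_le one_pos hM1
    set M := max 1 (kP n A hA α) with hMdef
    set T := max 1 μ * M with hTdef
    have hmax1 : (1:ℝ) ≤ max 1 μ := le_max_left _ _
    have hT1 : (1:ℝ) ≤ T := by nlinarith
    have hT0 : (0:ℝ) < T := lt_of_lt_of_le one_pos hT1
    have hkαM : kP n A hA α ≤ M := le_max_right _ _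
    have hβjT : ∀ j, (β j : ℝ) ≤ T := by
      intro j
      calc (β j : ℝ) ≤ (β j : ℝ) * (μ / muJ n A hA j) :=
            le_mul_of_one_le_right (Nat.cast_nonneg _) (hq1 j)
        _ ≤ ∑ l, (β l : ℝ) * (μ / muJ n A hA l) :=
            Finset.single_le_sum (f := fun l => (β l : ℝ) * (μ / muJ n A hA l))
              (fun l _ => mul_nonneg (Nat.cast_nonneg _) (hq0 l)) (Finset.mem_univ j)
        _ ≤ μ * mI β := hkeysum β
        _ ≤ μ * kP n A hA α := mul_le_mul_of_nonneg_left
            (le_trans (hmI_le_kP β) (hkP_mono β α hβle)) hmu_pos.le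
        _ ≤ max 1 μ * M := mul_le_mul (le_max_right 1 μ) hkαM (hkP_nonneg α)
            (le_trans zero_le_one hmax1)
    have hstep1 : (∏ j, ((β j).factorial : ℝ) ^ (μ / muJ n A hA j))
        ≤ ∏ j, T ^ ((β j : ℝ) * (μ / muJ n A hA j)) := by
      apply Finset.prod_le_prod
      · intro j _
        exact Real.rpow_nonneg (Nat.cast_nonneg _) _
      · intro j _
        have hf1 : ((β j).factorial : ℝ) ≤ ((β j : ℝ)) ^ (β j : ℕ) := by
          rw [show ((β j : ℝ)) ^ (β j : ℕ) = (((β j) ^ (β j) : ℕ) : ℝ) by push_cast; ring]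
          exact_mod_cast Nat.factorial_le_pow (β j)
        calc ((β j).factorial : ℝ) ^ (μ / muJ n A hA j)
            ≤ ((β j : ℝ) ^ (β j : ℕ)) ^ (μ / muJ n A hA j) :=
              Real.rpow_le_rpow (Nat.cast_nonneg _) hf1 (hq0 j)
          _ = (β j : ℝ) ^ ((β j : ℝ) * (μ / muJ n A hA j)) := by
              rw [← Real.rpow_natCast ((β j : ℝ)) (β j), ← Real.rpow_mul (Nat.cast_nonneg _)]
          _ ≤ T ^ ((β j : ℝ) * (μ / muJ n A hA j)) :=
              Real.rpow_le_rpow (Nat.cast_nonneg _) (hβjT j)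
                (mul_nonneg (Nat.cast_nonneg _) (hq0 j))
    have hstep2 : ∏ j, T ^ ((β j : ℝ) * (μ / muJ n A hA j))
        = T ^ (∑ j, (β j : ℝ) * (μ / muJ n A hA j)) :=
      (Real.rpow_sum_of_pos hT0 _ _).symm
    have hstep3 : T ^ (∑ j, (β j : ℝ) * (μ / muJ n A hA j)) ≤ T ^ (μ * mI β) :=
      Real.rpow_le_rpow_of_exponent_le hT1 (hkeysum β)
    have hstep4 : T ^ (μ * mI β) = (max 1 μ) ^ (μ * mI β) * M ^ (μ * mI β) :=
      Real.mul_rpow (le_trans zero_le_one hmax1) hM0.le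
    have hstep5 : (max 1 μ) ^ (μ * mI β) ≤ E ^ (∑ j, α j) := by
      have h2 : mI β ≤ Λ * ∑ j, (α j : ℝ) := le_trans (hmI_le_kP β)
        (le_trans (hkP_mono β α hβle) (hkPle α))
      have h3 : (((∑ j, α j : ℕ)) : ℝ) = ∑ j, (α j : ℝ) := by push_cast; rfl
      have h1 : μ * mI β ≤ (μ * Λ) * (((∑ j, α j : ℕ)) : ℝ) := by
        rw [h3]
        nlinarith [hmI_nonneg β]
      calc (max 1 μ) ^ (μ * mI β) ≤ (max 1 μ) ^ ((μ * Λ) * (((∑ j, α j : ℕ)) : ℝ)) :=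
            Real.rpow_le_rpow_of_exponent_le hmax1 h1
        _ = E ^ (∑ j, α j) := by
            rw [Real.rpow_mul (le_trans zero_le_one hmax1), ← hEdef, Real.rpow_natCast]
    have hstepF : kP n A hA (α - β) ^ (s * μ * kP n A hA (α - β))
        ≤ M ^ (s * μ * kP n A hA (α - β)) :=
      Real.rpow_le_rpow (hkP_nonneg _)
        (le_trans (hkP_mono _ α (fun j => Nat.sub_le _ _)) hkαM)
        (mul_nonneg (mul_nonneg (le_trans zero_le_one hs) hmu_pos.le) (hkP_nonneg _))
    have hstep6 : M ^ (μ * mI β) * M ^ (s * μ * kP n A hA (α - β))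
        ≤ M ^ (s * μ * kP n A hA α) := by
      rw [← Real.rpow_add hM0]
      apply Real.rpow_le_rpow_of_exponent_le hM1
      have h1 := hkeysplit α β hβle
      have h2 : 0 ≤ mI β := hmI_nonneg β
      have h3 : 0 ≤ kP n A hA (α - β) := hkP_nonneg _
      nlinarith [mul_le_mul_of_nonneg_left h1
          (mul_nonneg (le_trans zero_le_one hs) hmu_pos.le),
        mul_nonneg (mul_nonneg (sub_nonneg.2 hs) hmu_pos.le) h2]
    have hstep7 : M ^ (s * μ * kP n A hA α)
        ≤ ExpV * kP n A hA α ^ (s * μ * kP n A hA α) :=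
      max_one_rpow_le (kP n A hA α) (s * μ) (hkP_nonneg α)
        (mul_nonneg (le_trans zero_le_one hs) hmu_pos.le)
    calc (∏ j, ((β j).factorial : ℝ) ^ (μ / muJ n A hA j)) *
          kP n A hA (α - β) ^ (s * μ * kP n A hA (α - β))
        ≤ (T ^ (μ * mI β)) * (M ^ (s * μ * kP n A hA (α - β))) :=
          mul_le_mul (le_trans hstep1 (le_trans hstep2.le hstep3)) hstepF
            (Real.rpow_nonneg (hkP_nonneg _) _) (Real.rpow_nonneg hT0.le _)
      _ = (max 1 μ) ^ (μ * mI β) * (M ^ (μ * mI β) * M ^ (s * μ * kP n A hA (α - β))) := by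
          rw [hstep4]; ring
      _ ≤ E ^ (∑ j, α j) * (M ^ (μ * mI β) * M ^ (s * μ * kP n A hA (α - β))) :=
          mul_le_mul_of_nonneg_right hstep5
            (mul_nonneg (Real.rpow_nonneg hM0.le _) (Real.rpow_nonneg hM0.le _))
      _ ≤ E ^ (∑ j, α j) * M ^ (s * μ * kP n A hA α) :=
          mul_le_mul_of_nonneg_left hstep6 (pow_nonneg (le_trans zero_le_one hE1) _)
      _ ≤ E ^ (∑ j, α j) * (ExpV * kP n A hA α ^ (s * μ * kP n A hA α)) :=
          mul_le_mul_of_nonneg_left hstep7 (pow_nonneg (le_trans zero_le_one hE1) _)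

  have hCg'0 : (0:ℝ) ≤ Cg' := le_trans zero_le_one (le_max_left 1 Cg)
  have hCf'0 : (0:ℝ) ≤ Cf' := le_trans zero_le_one (le_max_left 1 Cf)
  have hS' : mderivR n α (fun y => g y * f y) x
      = ∑ β ∈ Fintype.piFinset (fun j => Finset.range (α j + 1)),
          (∏ j, ((α j).choose (β j) : ℝ)) * (mderivR n β g x * mderivR n (α - β) f x) :=
    mderivL_leibniz hΩ hg hf (List.finRange n) (List.nodup_finRange n) α
      (fun j hj => absurd (List.mem_finRange j) hj) x hxΩ
  have habs : |mderivR n α (fun y => g y * f y) x|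
      ≤ ∑ β ∈ Fintype.piFinset (fun j => Finset.range (α j + 1)),
          (∏ j, ((α j).choose (β j) : ℝ)) * (|mderivR n β g x| * |mderivR n (α - β) f x|) := by
    rw [hS']
    refine le_trans (Finset.abs_sum_le_sum_abs _ _) (Finset.sum_le_sum ?_)
    intro β _
    rw [abs_mul, abs_mul, abs_of_nonneg (Finset.prod_nonneg fun j _ => Nat.cast_nonneg _)]
  have hterm : ∀ β ∈ Fintype.piFinset (fun j => Finset.range (α j + 1)),
      (∏ j, ((α j).choose (β j) : ℝ)) * (|mderivR n β g x| * |mderivR n (α - β) f x|)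
      ≤ (∏ j, ((α j).choose (β j) : ℝ)) *
        (Cg' ^ N * Cf' ^ N * (E ^ (∑ j, α j) * (ExpV * kP n A hA α ^ (s * μ * kP n A hA α)))) := by
    intro β hβ
    have hβle : ∀ j, β j ≤ α j := fun j =>
      Nat.lt_succ_iff.1 (Finset.mem_range.1 (Fintype.mem_piFinset.1 hβ j))
    refine mul_le_mul_of_nonneg_left ?_ (Finset.prod_nonneg fun j _ => Nat.cast_nonneg _)
    have hg1 := hCgb β x hxK
    have hf1 := hCfb (α - β) x hxK
    have hCgpow : Cg ^ ((∑ j, β j) + 1) ≤ Cg' ^ N := by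
      calc Cg ^ ((∑ j, β j) + 1) ≤ Cg' ^ ((∑ j, β j) + 1) :=
            pow_le_pow_left₀ hCg0.le (le_max_right 1 Cg) _
        _ ≤ Cg' ^ N := pow_le_pow_right₀ (le_max_left 1 Cg)
            (Nat.add_le_add_right (Finset.sum_le_sum fun j _ => hβle j) 1)
    have hCfpow : Cf ^ ((∑ j, (α - β) j) + 1) ≤ Cf' ^ N := by
      calc Cf ^ ((∑ j, (α - β) j) + 1) ≤ Cf' ^ ((∑ j, (α - β) j) + 1) :=
            pow_le_pow_left₀ hCf0.le (le_max_right 1 Cf) _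
        _ ≤ Cf' ^ N := pow_le_pow_right₀ (le_max_left 1 Cf)
            (Nat.add_le_add_right (Finset.sum_le_sum fun j _ => Nat.sub_le _ _) 1)
    calc |mderivR n β g x| * |mderivR n (α - β) f x|
        ≤ (Cg ^ ((∑ j, β j) + 1) * ∏ j, ((β j).factorial : ℝ) ^ (μ / muJ n A hA j)) *
          (Cf ^ ((∑ j, (α - β) j) + 1) * kP n A hA (α - β) ^ (s * μ * kP n A hA (α - β))) :=
          mul_le_mul hg1 hf1 (abs_nonneg _) (le_trans (abs_nonneg _) hg1)
      _ = (Cg ^ ((∑ j, β j) + 1) * Cf ^ ((∑ j, (α - β) j) + 1)) *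
          ((∏ j, ((β j).factorial : ℝ) ^ (μ / muJ n A hA j)) *
            kP n A hA (α - β) ^ (s * μ * kP n A hA (α - β))) := by ring
      _ ≤ (Cg' ^ N * Cf' ^ N) *
          (E ^ (∑ j, α j) * (ExpV * kP n A hA α ^ (s * μ * kP n A hA α))) := by
          refine mul_le_mul (mul_le_mul hCgpow hCfpow (pow_nonneg hCf0.le _)
              (pow_nonneg hCg'0 _)) (hcore β hβle) ?_ ?_
          · exact mul_nonneg
              (Finset.prod_nonneg fun j _ => Real.rpow_nonneg (Nat.cast_nonneg _) _)
              (Real.rpow_nonneg (hkP_nonneg _) _)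
          · exact mul_nonneg (pow_nonneg hCg'0 _) (pow_nonneg hCf'0 _)
      _ = Cg' ^ N * Cf' ^ N *
          (E ^ (∑ j, α j) * (ExpV * kP n A hA α ^ (s * μ * kP n A hA α))) := by ring
  have hcoefsum : (∑ β ∈ Fintype.piFinset (fun j => Finset.range (α j + 1)),
      ∏ j, ((α j).choose (β j) : ℝ)) = 2 ^ (∑ j, α j) := by
    rw [← Finset.prod_univ_sum (fun j => Finset.range (α j + 1)) (fun j i => ((α j).choose i : ℝ))]
    have h1 : ∀ j : Fin n, ∑ i ∈ Finset.range (α j + 1), ((α j).choose i : ℝ)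
        = 2 ^ (α j) := by
      intro j
      rw [← Nat.cast_sum, Nat.sum_range_choose]
      push_cast
      ring
    rw [Finset.prod_congr rfl fun j _ => h1 j, Finset.prod_pow_eq_pow_sum]
  have hNα : (∑ j, α j) ≤ N := Nat.le_succ _
  have hN0 : N ≠ 0 := Nat.succ_ne_zero _
  have hkk : 0 ≤ kP n A hA α ^ (s * μ * kP n A hA α) := Real.rpow_nonneg (hkP_nonneg α) _
  have e1 : (2:ℝ) ^ (∑ j, α j) ≤ 2 ^ N := pow_le_pow_right₀ one_le_two hNα
  have e2 : E ^ (∑ j, α j) ≤ E ^ N := pow_le_pow_right₀ hE1 hNα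
  have e3 : ExpV ≤ ExpV ^ N := le_self_pow₀ hExp1 hN0
  have hbig : (2:ℝ) ^ (∑ j, α j) * Cg' ^ N * Cf' ^ N * E ^ (∑ j, α j) * ExpV
      ≤ 2 ^ N * Cg' ^ N * Cf' ^ N * E ^ N * ExpV ^ N := by
    have n1 : (0:ℝ) ≤ Cg' ^ N := pow_nonneg hCg'0 _
    have n2 : (0:ℝ) ≤ Cf' ^ N := pow_nonneg hCf'0 _
    have n3 : (0:ℝ) ≤ (2:ℝ) ^ N := by positivity
    have n4 : (0:ℝ) ≤ E ^ N := pow_nonneg (le_trans zero_le_one hE1) _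
    have n5 : (0:ℝ) ≤ E ^ (∑ j, α j) := pow_nonneg (le_trans zero_le_one hE1) _
    have n6 : (0:ℝ) ≤ ExpV := le_trans zero_le_one hExp1
    refine mul_le_mul (mul_le_mul (mul_le_mul (mul_le_mul e1 le_rfl n1 n3) le_rfl n2
      (mul_nonneg n3 n1)) e2 n5 (mul_nonneg (mul_nonneg n3 n1) n2)) e3 n6
      (mul_nonneg (mul_nonneg (mul_nonneg n3 n1) n2) n4)
  calc |mderivR n α (fun y => g y * f y) x|
      ≤ ∑ β ∈ Fintype.piFinset (fun j => Finset.range (α j + 1)),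
          (∏ j, ((α j).choose (β j) : ℝ)) *
          (Cg' ^ N * Cf' ^ N * (E ^ (∑ j, α j) * (ExpV * kP n A hA α ^ (s * μ * kP n A hA α))))
        := le_trans habs (Finset.sum_le_sum hterm)
    _ = (2:ℝ) ^ (∑ j, α j) *
          (Cg' ^ N * Cf' ^ N * (E ^ (∑ j, α j) * (ExpV * kP n A hA α ^ (s * μ * kP n A hA α))))
        := by rw [← Finset.sum_mul, hcoefsum]
    _ = ((2:ℝ) ^ (∑ j, α j) * Cg' ^ N * Cf' ^ N * E ^ (∑ j, α j) * ExpV) *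
          kP n A hA α ^ (s * μ * kP n A hA α) := by ring
    _ ≤ (2 ^ N * Cg' ^ N * Cf' ^ N * E ^ N * ExpV ^ N) *
          kP n A hA α ^ (s * μ * kP n A hA α) := mul_le_mul_of_nonneg_right hbig hkk
    _ = (2 * Cg' * Cf' * E * ExpV) ^ N * kP n A hA α ^ (s * μ * kP n A hA α) := by ring
end

section
/- Let P be a regular Newton polyhedron with vertices s⁰=0, s¹,…,sᵐ, and μ as usual, with weight |ξ|_P = (Σ_i (ξ^{2sⁱ})^{1/μ})^{1/2}. Suppose P(ξ) = Σ_{α∈Λ} a_α ξ^α is a polynomial with Newton polyhedron P which is multi-quasielliptic: ∃C, R with |ξ|_P^{μ} ≤ C|P(ξ)| for |ξ| ≥ R. Then for every multi-index β ∈ ℤ₊ⁿ there exist C_β, R_β with |D^β P(ξ)| ≤ C_β |P(ξ)| for |ξ| ≥ R_β, i.e., derivatives of a multi-quasielliptic polynomial are dominated by the polynomial itself at infinity. -/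
/-- Partial derivative in the `j`-th coordinate direction. -/
noncomputable def pderivC (n : ℕ) (j : Fin n) (u : (Fin n → ℝ) → ℂ) : (Fin n → ℝ) → ℂ :=
  fun x => fderiv ℝ u x (Pi.single j 1)

/-- Multi-index derivative `D^β u`. -/
noncomputable def mderivC (n : ℕ) (β : Fin n → ℕ) (u : (Fin n → ℝ) → ℂ) :
    (Fin n → ℝ) → ℂ :=
  (List.finRange n).foldr (fun j v => (pderivC n j)^[β j] v) u

/-- The polynomial `P(ξ) = Σ_{α∈Λ} a_α ξ^α`. -/
noncomputable def polyP (n : ℕ) (Λ : Finset (Fin n → ℕ)) (a : (Fin n → ℕ) → ℂ) :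
    (Fin n → ℝ) → ℂ :=
  fun ξ => ∑ α ∈ Λ, a α * ∏ j, (ξ j : ℂ) ^ α j

open Finset

noncomputable def coordCLM (n : ℕ) (k : Fin n) : (Fin n → ℝ) →L[ℝ] ℂ :=
  Complex.ofRealCLM.comp (ContinuousLinearMap.proj k)

lemma coordCLM_apply (n : ℕ) (k : Fin n) (v : Fin n → ℝ) : coordCLM n k v = (v k : ℂ) := rfl

lemma hasFDerivAt_coordpow (n : ℕ) (k : Fin n) (m : ℕ) (x : Fin n → ℝ) :
    HasFDerivAt (fun ξ : Fin n → ℝ => ((ξ k : ℂ)) ^ m)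
      ((((ContinuousLinearMap.smulRight (1 : ℂ →L[ℂ] ℂ)
          ((m : ℂ) * (x k : ℂ) ^ (m - 1))).restrictScalars ℝ)).comp (coordCLM n k)) x := by
  have hφ : HasFDerivAt (fun ξ : Fin n → ℝ => ((ξ k : ℂ))) (coordCLM n k) x :=
    (coordCLM n k).hasFDerivAt
  have hg := ((hasDerivAt_pow m ((x k : ℂ))).hasFDerivAt).restrictScalars ℝ
  exact hg.comp x hφ

/-- the product of coordinate powers, with its derivative. -/
lemma hasFDerivAt_monomial (n : ℕ) (m : Fin n → ℕ) (x : Fin n → ℝ) :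
    HasFDerivAt (fun ξ : Fin n → ℝ => ∏ k, ((ξ k : ℂ)) ^ m k)
      (∑ k, (∏ l ∈ univ.erase k, ((x l : ℂ)) ^ m l) •
        ((((ContinuousLinearMap.smulRight (1 : ℂ →L[ℂ] ℂ)
          ((m k : ℂ) * (x k : ℂ) ^ (m k - 1))).restrictScalars ℝ)).comp (coordCLM n k))) x :=
  HasFDerivAt.finset_prod (fun k _ => hasFDerivAt_coordpow n k (m k) x)

/-- evaluation of the monomial derivative in direction `j`. -/
lemma pderivC_monomial_sum {n : ℕ} (ι : Type*) (S : Finset ι) (c : ι → ℂ)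
    (e : ι → Fin n → ℕ) (j : Fin n) :
    pderivC n j (fun ξ => ∑ i ∈ S, c i * ∏ k, ((ξ k : ℂ)) ^ e i k)
      = fun ξ => ∑ i ∈ S, (c i * (e i j : ℂ)) *
          ∏ k, ((ξ k : ℂ)) ^ (Function.update (e i) j (e i j - 1)) k := by
  funext x
  have hterm : ∀ i : ι, HasFDerivAt (fun ξ : Fin n → ℝ => c i * ∏ k, ((ξ k : ℂ)) ^ e i k)
      (c i • (∑ k, (∏ l ∈ univ.erase k, ((x l : ℂ)) ^ e i l) •
        ((((ContinuousLinearMap.smulRight (1 : ℂ →L[ℂ] ℂ)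
          ((e i k : ℂ) * (x k : ℂ) ^ (e i k - 1))).restrictScalars ℝ)).comp (coordCLM n k)))) x :=
    fun i => (hasFDerivAt_monomial n (e i) x).const_mul (c i)
  have hsum : HasFDerivAt (fun ξ : Fin n → ℝ => ∑ i ∈ S, c i * ∏ k, ((ξ k : ℂ)) ^ e i k)
      (∑ i ∈ S, c i • (∑ k, (∏ l ∈ univ.erase k, ((x l : ℂ)) ^ e i l) •
        ((((ContinuousLinearMap.smulRight (1 : ℂ →L[ℂ] ℂ)
          ((e i k : ℂ) * (x k : ℂ) ^ (e i k - 1))).restrictScalars ℝ)).comp (coordCLM n k)))) x :=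
    HasFDerivAt.fun_sum (fun i _ => hterm i)
  rw [pderivC, hsum.fderiv]
  rw [ContinuousLinearMap.sum_apply]
  refine Finset.sum_congr rfl (fun i _ => ?_)
  rw [ContinuousLinearMap.smul_apply, ContinuousLinearMap.sum_apply]
  have hone : ∀ k : Fin n, (coordCLM n k) (Pi.single j 1) = if k = j then 1 else 0 := by
    intro k
    rw [coordCLM_apply]
    by_cases h : k = j <;> simp [h, Pi.single_apply]
  rw [Finset.sum_eq_single j]
  · simp only [ContinuousLinearMap.smul_apply, ContinuousLinearMap.comp_apply, hone,
      if_pos rfl]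
    simp only [if_true, ContinuousLinearMap.coe_restrictScalars',
      ContinuousLinearMap.smulRight_apply, ContinuousLinearMap.one_apply, smul_eq_mul, mul_one]
    -- goal: c i * ((∏ erase) * ((e i j) * x j ^ (e i j - 1) * 1)) = c i * e i j * ∏ update
    have hprod : (∏ l ∈ univ.erase j, ((x l : ℂ)) ^ e i l) * (x j : ℂ) ^ (e i j - 1)
        = ∏ k, ((x k : ℂ)) ^ (Function.update (e i) j (e i j - 1)) k := by
      rw [← Finset.prod_erase_mul (univ) _ (mem_univ j)]
      rw [Function.update_self]
      congr 1
      refine Finset.prod_congr rfl (fun l hl => ?_)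
      rw [Function.update_of_ne (Finset.ne_of_mem_erase hl)]
    rw [← hprod]
    ring
  · intro k _ hk
    simp [ContinuousLinearMap.comp_apply, hone, hk]
  · simp

lemma iter_pderivC {n : ℕ} {ι : Type*} (S : Finset ι) (c : ι → ℂ)
    (e : ι → Fin n → ℕ) (j : Fin n) (m : ℕ) :
    (pderivC n j)^[m] (fun ξ => ∑ i ∈ S, c i * ∏ k, ((ξ k : ℂ)) ^ e i k)
      = fun ξ => ∑ i ∈ S, (c i * ∏ t ∈ Finset.range m, ((e i j - t : ℕ) : ℂ)) *
          ∏ k, ((ξ k : ℂ)) ^ (Function.update (e i) j (e i j - m)) k := by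
  induction m with
  | zero =>
    simp only [Function.iterate_zero, id_eq, Finset.range_zero, Finset.prod_empty, mul_one,
      Nat.sub_zero, Function.update_eq_self]
  | succ m ih =>
    rw [Function.iterate_succ', Function.comp_apply, ih,
      pderivC_monomial_sum ι S (fun i => c i * ∏ t ∈ Finset.range m, ((e i j - t : ℕ) : ℂ))
        (fun i => Function.update (e i) j (e i j - m)) j]
    funext ξ
    refine Finset.sum_congr rfl (fun i _ => ?_)
    have h1 : Function.update (e i) j (e i j - m) j = e i j - m := Function.update_self _ _ _
    congr 1
    · rw [h1, Finset.prod_range_succ, mul_assoc]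
    · refine Finset.prod_congr rfl (fun k _ => ?_)
      congr 1
      rw [Function.update_idem, h1, Nat.sub_sub]

lemma foldr_pderivC {n : ℕ} {ι : Type*} (β : Fin n → ℕ) :
    ∀ (l : List (Fin n)), l.Nodup → ∀ (S : Finset ι) (c : ι → ℂ) (e : ι → Fin n → ℕ),
    (l.foldr (fun j v => (pderivC n j)^[β j] v)
        (fun ξ => ∑ i ∈ S, c i * ∏ k, ((ξ k : ℂ)) ^ e i k))
      = fun ξ => ∑ i ∈ S,
          (c i * ∏ j ∈ l.toFinset, ∏ t ∈ Finset.range (β j), ((e i j - t : ℕ) : ℂ)) *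
          ∏ k, ((ξ k : ℂ)) ^ (if k ∈ l then e i k - β k else e i k) := by
  intro l
  induction l with
  | nil => intro _ S c e; simp
  | cons j l' ih =>
    intro hnd S c e
    have hj : j ∉ l' := (List.nodup_cons.mp hnd).1
    have hnd' : l'.Nodup := (List.nodup_cons.mp hnd).2
    rw [List.foldr_cons, ih hnd' S c e, iter_pderivC]
    funext ξ
    refine Finset.sum_congr rfl (fun i _ => ?_)
    have hji : (if j ∈ l' then e i j - β j else e i j) = e i j := by simp [hj]
    congr 1
    · rw [List.toFinset_cons, Finset.prod_insert (by simpa using hj), hji]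
      ring
    · refine Finset.prod_congr rfl (fun k _ => ?_)
      congr 1
      by_cases hk : k = j
      · subst hk
        rw [Function.update_self, hji]
        simp
      · rw [Function.update_of_ne hk]
        simp only [List.mem_cons, hk, false_or]

open Finset in
/-- Convexity bound: if every vertex monomial is `≤ B` and the Newton polyhedron condition
holds, then any monomial with exponent in the polyhedron is `≤ B`. -/
lemma convex_monomial_bound (n : ℕ)
    (A : Finset (Fin n → ℝ)) (hA : A.Nonempty)
    (V : Finset (Fin n → ℕ))
    (hPV : convexHull ℝ
        ({0} ∪ ((fun v : Fin n → ℕ => fun j => (v j : ℝ)) '' (V : Set (Fin n → ℕ))))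
      = {α : Fin n → ℝ | (∀ j, 0 ≤ α j) ∧ ∀ a ∈ A, ∑ j, α j * a j ≤ 1})
    (B : ℝ) (hB1 : 1 ≤ B) (ξ : Fin n → ℝ)
    (hVB : ∀ v ∈ V, ∏ j, |ξ j| ^ v j ≤ B)
    (m : Fin n → ℕ) (hm : ∀ w ∈ A, ∑ j, (m j : ℝ) * w j ≤ 1) :
    ∏ j, |ξ j| ^ m j ≤ B := by
  classical
  have hB0 : (0 : ℝ) ≤ B := le_trans zero_le_one hB1
  set F : Finset (Fin n → ℝ) := insert 0 (V.image (fun v : Fin n → ℕ => fun j => (v j : ℝ)))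
    with hF
  have hFcoe : (F : Set (Fin n → ℝ))
      = {0} ∪ ((fun v : Fin n → ℕ => fun j => (v j : ℝ)) '' (V : Set (Fin n → ℕ))) := by
    simp [hF, Set.singleton_union]
  have hmem : (fun j => (m j : ℝ)) ∈ convexHull ℝ (F : Set (Fin n → ℝ)) := by
    rw [hFcoe, hPV]
    exact ⟨fun j => by positivity, hm⟩
  obtain ⟨w, hw0, hw1, hwsum⟩ := Finset.mem_convexHull'.mp hmem
  -- each vertex monomial (as rpow) bounded by B
  have hyB : ∀ y ∈ F, ∏ j, |ξ j| ^ (y j) ≤ B := by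
    intro y hy
    rw [hF, Finset.mem_insert] at hy
    rcases hy with rfl | hy
    · simp only [Pi.zero_apply, Real.rpow_zero, Finset.prod_const_one]
      exact hB1
    · obtain ⟨v, hv, rfl⟩ := Finset.mem_image.mp hy
      have : ∏ j, |ξ j| ^ ((v j : ℝ)) = ∏ j, |ξ j| ^ v j := by
        refine Finset.prod_congr rfl (fun j _ => ?_)
        exact Real.rpow_natCast _ _
      rw [this]
      exact hVB v hv
  have hy0 : ∀ y ∈ F, ∀ j, (0 : ℝ) ≤ y j := by
    intro y hy
    rw [hF, Finset.mem_insert] at hy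
    rcases hy with rfl | hy
    · intro j; simp
    · obtain ⟨v, hv, rfl⟩ := Finset.mem_image.mp hy
      intro j; positivity
  -- rewrite the monomial using the convex decomposition
  have hmj : ∀ j, (m j : ℝ) = ∑ y ∈ F, w y * y j := by
    intro j
    have := congrFun hwsum j
    simp only [Finset.sum_apply, Pi.smul_apply, smul_eq_mul] at this
    exact this.symm
  have key : ∏ j, |ξ j| ^ m j = ∏ y ∈ F, (∏ j, |ξ j| ^ (y j)) ^ (w y) := by
    have h1 : ∏ j, |ξ j| ^ m j = ∏ j, |ξ j| ^ ((m j : ℝ)) := by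
      refine Finset.prod_congr rfl (fun j _ => (Real.rpow_natCast _ _).symm)
    rw [h1]
    have h2 : ∀ j, |ξ j| ^ ((m j : ℝ)) = ∏ y ∈ F, |ξ j| ^ (w y * y j) := by
      intro j
      rw [hmj j]
      exact Real.rpow_sum_of_nonneg (abs_nonneg _)
        (fun y hy => mul_nonneg (hw0 y hy) (hy0 y hy j))
    calc ∏ j, |ξ j| ^ ((m j : ℝ)) = ∏ j, ∏ y ∈ F, |ξ j| ^ (w y * y j) := by
          exact Finset.prod_congr rfl (fun j _ => h2 j)
      _ = ∏ y ∈ F, ∏ j, |ξ j| ^ (w y * y j) := Finset.prod_comm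
      _ = ∏ y ∈ F, (∏ j, |ξ j| ^ (y j)) ^ (w y) := by
          refine Finset.prod_congr rfl (fun y hy => ?_)
          rw [← Real.finset_prod_rpow _ _ (fun j _ => Real.rpow_nonneg (abs_nonneg _) _)]
          refine Finset.prod_congr rfl (fun j _ => ?_)
          rw [← Real.rpow_mul (abs_nonneg _), mul_comm (y j) (w y)]
  rw [key]
  calc ∏ y ∈ F, (∏ j, |ξ j| ^ (y j)) ^ (w y)
      ≤ ∏ y ∈ F, B ^ (w y) := by
        refine Finset.prod_le_prod (fun y _ => Real.rpow_nonneg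
          (Finset.prod_nonneg fun j _ => Real.rpow_nonneg (abs_nonneg _) _) _) ?_
        intro y hy
        exact Real.rpow_le_rpow
          (Finset.prod_nonneg fun j _ => Real.rpow_nonneg (abs_nonneg _) _)
          (hyB y hy) (hw0 y hy)
    _ = B ^ (∑ y ∈ F, w y) := (Real.rpow_sum_of_nonneg hB0 hw0).symm
    _ = B := by rw [hw1, Real.rpow_one]

open Finset in
lemma mderivC_polyP (n : ℕ) (Λ : Finset (Fin n → ℕ)) (a : (Fin n → ℕ) → ℂ)
    (β : Fin n → ℕ) :
    mderivC n β (polyP n Λ a)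
      = fun ξ => ∑ α ∈ Λ,
          (a α * ∏ j, ∏ t ∈ Finset.range (β j), ((α j - t : ℕ) : ℂ)) *
          ∏ k, ((ξ k : ℂ)) ^ (α k - β k) := by
  rw [mderivC]
  have h := foldr_pderivC β (List.finRange n) (List.nodup_finRange n) Λ a (fun α => α)
  rw [show polyP n Λ a = (fun ξ => ∑ i ∈ Λ, a i * ∏ k, ((ξ k : ℂ)) ^ i k) from rfl, h]
  funext ξ
  refine Finset.sum_congr rfl (fun α _ => ?_)
  congr 1
  · congr 1
    have : (List.finRange n).toFinset = Finset.univ := by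
      ext k; simp [List.mem_finRange]
    rw [this]
  · refine Finset.prod_congr rfl (fun k _ => ?_)
    simp [List.mem_finRange]

/-- if `P(ξ) = Σ_{α∈Λ} a_α ξ^α` has regular Newton polyhedron `P`
(convex hull of `{0} ∪ V`, cut out by the weights `A ⊂ (0,∞)ⁿ`, with axis vertices) and
is multi-quasielliptic, i.e. `|ξ|_P^μ ≤ C|P(ξ)|` for `|ξ| ≥ R`, then every derivative of
`P` is dominated by `P` at infinity: `∀β ∃ C_β R_β, |D^βP(ξ)| ≤ C_β|P(ξ)|` for
`|ξ| ≥ R_β`. -/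
theorem multiquasielliptic_derivative_bound (n : ℕ)
    (hn : (Finset.univ : Finset (Fin n)).Nonempty)
    (A : Finset (Fin n → ℝ)) (hA : A.Nonempty) (hpos : ∀ a ∈ A, ∀ j, 0 < a j)
    (V : Finset (Fin n → ℕ)) (hV : V.Nonempty)
    (hPV : convexHull ℝ
        ({0} ∪ ((fun v : Fin n → ℕ => fun j => (v j : ℝ)) '' (V : Set (Fin n → ℕ))))
      = {α : Fin n → ℝ | (∀ j, 0 ≤ α j) ∧ ∀ a ∈ A, ∑ j, α j * a j ≤ 1})
    (haxis : ∀ j, ∃ v ∈ V, 0 < v j ∧ ∀ i, i ≠ j → v i = 0)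
    (Λ : Finset (Fin n → ℕ)) (a : (Fin n → ℕ) → ℂ)
    (hΛ : ∀ α ∈ Λ, A.sup' hA (fun w => ∑ j, (α j : ℝ) * w j) ≤ 1)
    (hellip : ∃ C R : ℝ, 0 < C ∧ ∀ ξ : Fin n → ℝ, R ≤ ‖ξ‖ →
      Real.sqrt (∑ v ∈ V, (∏ j, ξ j ^ (2 * v j))
          ^ ((A.sup' hA fun w => Finset.univ.sup' hn fun j => (w j)⁻¹) : ℝ)⁻¹)
        ^ (A.sup' hA fun w => Finset.univ.sup' hn fun j => (w j)⁻¹)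
      ≤ C * ‖polyP n Λ a ξ‖) :
    ∀ β : Fin n → ℕ, ∃ Cβ Rβ : ℝ, 0 < Cβ ∧ ∀ ξ : Fin n → ℝ, Rβ ≤ ‖ξ‖ →
      ‖mderivC n β (polyP n Λ a) ξ‖ ≤ Cβ * ‖polyP n Λ a ξ‖ := by
  classical
  intro β
  obtain ⟨C, R, hC, hell⟩ := hellip
  set μ : ℝ := A.sup' hA fun w => Finset.univ.sup' hn fun j => (w j)⁻¹ with hμdef
  -- μ ≥ 1
  have hVsub : ∀ v ∈ V, ∀ w ∈ A, ∑ j, (v j : ℝ) * w j ≤ 1 := by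
    intro v hv w hw
    have hmem : (fun j => (v j : ℝ)) ∈ convexHull ℝ
        ({0} ∪ ((fun v : Fin n → ℕ => fun j => (v j : ℝ)) '' (V : Set (Fin n → ℕ)))) := by
      apply subset_convexHull
      exact Set.mem_union_right _ ⟨v, by simpa using hv, rfl⟩
    rw [hPV] at hmem
    exact hmem.2 w hw
  have hμ1 : 1 ≤ μ := by
    obtain ⟨w₀, hw₀⟩ := hA
    obtain ⟨j₀, -⟩ := id hn
    obtain ⟨v, hv, hvj, hvi⟩ := haxis j₀
    have hsum := hVsub v hv w₀ hw₀
    have hterm : (v j₀ : ℝ) * w₀ j₀ ≤ 1 := by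
      refine le_trans ?_ hsum
      exact Finset.single_le_sum (f := fun j => (v j : ℝ) * w₀ j)
        (fun i _ => mul_nonneg (by positivity) (le_of_lt (hpos w₀ hw₀ i))) (Finset.mem_univ j₀)
    have hwj : w₀ j₀ ≤ 1 := by
      have h1 : (1 : ℝ) ≤ (v j₀ : ℝ) := by exact_mod_cast hvj
      nlinarith [hpos w₀ hw₀ j₀]
    have hinv : (1 : ℝ) ≤ (w₀ j₀)⁻¹ := one_le_inv_iff₀.mpr ⟨hpos w₀ hw₀ j₀, hwj⟩
    calc (1 : ℝ) ≤ (w₀ j₀)⁻¹ := hinv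
      _ ≤ Finset.univ.sup' hn fun j => (w₀ j)⁻¹ :=
          Finset.le_sup' (f := fun j => (w₀ j)⁻¹) (Finset.mem_univ j₀)
      _ ≤ μ := by
          rw [hμdef]
          exact Finset.le_sup' (f := fun w => Finset.univ.sup' hn fun j => (w j)⁻¹) hw₀
  have hμ0 : (0 : ℝ) < μ := lt_of_lt_of_le one_pos hμ1
  refine ⟨(∑ α ∈ Λ, ‖a α * ∏ j, ∏ t ∈ Finset.range (β j), ((α j - t : ℕ) : ℂ)‖) * C + 1,
    max R 1, by positivity, ?_⟩
  intro ξ hξ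
  have hξR : R ≤ ‖ξ‖ := le_trans (le_max_left _ _) hξ
  have hξ1 : (1 : ℝ) ≤ ‖ξ‖ := le_trans (le_max_right _ _) hξ
  set S : ℝ := ∑ v ∈ V, (∏ j, ξ j ^ (2 * v j)) ^ (μ⁻¹) with hSdef
  have hterm0 : ∀ v : Fin n → ℕ, (0 : ℝ) ≤ ∏ j, ξ j ^ (2 * v j) := by
    intro v
    refine Finset.prod_nonneg (fun j _ => ?_)
    exact Even.pow_nonneg ⟨v j, by ring⟩ _
  have hS0 : (0 : ℝ) ≤ S :=
    Finset.sum_nonneg fun v _ => Real.rpow_nonneg (hterm0 v) _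
  set W : ℝ := Real.sqrt S with hWdef
  have hW0 : (0 : ℝ) ≤ W := Real.sqrt_nonneg _
  -- there is a coordinate achieving the norm
  obtain ⟨j₁, -, hj₁⟩ := Finset.exists_mem_eq_sup Finset.univ hn (fun j => ‖ξ j‖₊)
  have hnorm : ‖ξ‖ = |ξ j₁| := by
    rw [Pi.norm_def, hj₁]
    rfl
  -- W ≥ 1
  have hW1 : (1 : ℝ) ≤ W := by
    obtain ⟨v, hv, hvj, hvi⟩ := haxis j₁
    have hprod : ∏ j, ξ j ^ (2 * v j) = ξ j₁ ^ (2 * v j₁) := by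
      refine Finset.prod_eq_single j₁ (fun i _ hi => ?_) (fun h => absurd (Finset.mem_univ j₁) h)
      rw [hvi i hi]; norm_num
    have habs : ξ j₁ ^ (2 * v j₁) = |ξ j₁| ^ (2 * v j₁) := by
      rw [← abs_of_nonneg (Even.pow_nonneg ⟨v j₁, by ring⟩ (ξ j₁)), abs_pow]
    have hge1 : (1 : ℝ) ≤ ξ j₁ ^ (2 * v j₁) := by
      rw [habs]
      refine one_le_pow₀ ?_
      rw [← hnorm]; exact hξ1
    have hterm1 : (1 : ℝ) ≤ (∏ j, ξ j ^ (2 * v j)) ^ (μ⁻¹) := by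
      rw [hprod]
      calc (1 : ℝ) = 1 ^ (μ⁻¹) := (Real.one_rpow _).symm
        _ ≤ (ξ j₁ ^ (2 * v j₁)) ^ (μ⁻¹) :=
            Real.rpow_le_rpow zero_le_one hge1 (inv_nonneg.mpr (le_of_lt hμ0))
    have hS1 : (1 : ℝ) ≤ S := by
      refine le_trans hterm1 ?_
      exact Finset.single_le_sum (fun v _ => Real.rpow_nonneg (hterm0 v) _) hv
    calc (1 : ℝ) = Real.sqrt 1 := Real.sqrt_one.symm
      _ ≤ W := Real.sqrt_le_sqrt hS1
  set B : ℝ := W ^ μ with hBdef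
  have hB1 : (1 : ℝ) ≤ B := by
    calc (1 : ℝ) = 1 ^ μ := (Real.one_rpow _).symm
      _ ≤ W ^ μ := Real.rpow_le_rpow zero_le_one hW1 (le_of_lt hμ0)
  -- each vertex monomial is bounded by B
  have hVB : ∀ v ∈ V, ∏ j, |ξ j| ^ v j ≤ B := by
    intro v hv
    have hsq : (∏ j, |ξ j| ^ v j) ^ 2 = ∏ j, ξ j ^ (2 * v j) := by
      rw [← Finset.prod_pow]
      refine Finset.prod_congr rfl (fun j _ => ?_)
      rw [← pow_mul, mul_comm (v j) 2, ← abs_pow,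
        abs_of_nonneg (Even.pow_nonneg ⟨v j, by ring⟩ (ξ j))]
    have hpr0 : (0 : ℝ) ≤ ∏ j, |ξ j| ^ v j :=
      Finset.prod_nonneg fun j _ => pow_nonneg (abs_nonneg _) _
    have hsqrt : ∏ j, |ξ j| ^ v j = Real.sqrt (∏ j, ξ j ^ (2 * v j)) := by
      rw [← hsq, Real.sqrt_sq hpr0]
    have hPleS : ∏ j, ξ j ^ (2 * v j) ≤ S ^ μ := by
      have h1 : (∏ j, ξ j ^ (2 * v j)) ^ (μ⁻¹) ≤ S :=
        Finset.single_le_sum (fun v _ => Real.rpow_nonneg (hterm0 v) _) hv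
      have h2 : ((∏ j, ξ j ^ (2 * v j)) ^ (μ⁻¹)) ^ μ ≤ S ^ μ :=
        Real.rpow_le_rpow (Real.rpow_nonneg (hterm0 v) _) h1 (le_of_lt hμ0)
      rwa [← Real.rpow_mul (hterm0 v), inv_mul_cancel₀ (ne_of_gt hμ0), Real.rpow_one] at h2
    rw [hsqrt, hBdef, hWdef]
    calc Real.sqrt (∏ j, ξ j ^ (2 * v j)) ≤ Real.sqrt (S ^ μ) := Real.sqrt_le_sqrt hPleS
      _ = Real.sqrt S ^ μ := by
          rw [Real.sqrt_eq_rpow, Real.sqrt_eq_rpow, ← Real.rpow_mul hS0,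
            ← Real.rpow_mul hS0, mul_comm μ (1 / 2)]
  -- the elliptic bound
  have hWP : B ≤ C * ‖polyP n Λ a ξ‖ := hell ξ hξR
  -- the derivative formula and final estimate
  rw [mderivC_polyP]
  have hbound : ∀ α ∈ Λ,
      ‖(a α * ∏ j, ∏ t ∈ Finset.range (β j), ((α j - t : ℕ) : ℂ)) *
        ∏ k, ((ξ k : ℂ)) ^ (α k - β k)‖
      ≤ ‖a α * ∏ j, ∏ t ∈ Finset.range (β j), ((α j - t : ℕ) : ℂ)‖ * B := by
    intro α hα
    rw [norm_mul]
    refine mul_le_mul_of_nonneg_left ?_ (norm_nonneg _)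
    have hnm : ‖∏ k, ((ξ k : ℂ)) ^ (α k - β k)‖ = ∏ k, |ξ k| ^ (α k - β k) := by
      rw [norm_prod]
      refine Finset.prod_congr rfl (fun k _ => ?_)
      rw [norm_pow, Complex.norm_real, Real.norm_eq_abs]
    rw [hnm]
    refine convex_monomial_bound n A hA V hPV B hB1 ξ hVB (fun k => α k - β k) ?_
    intro w hw
    have h1 : ∑ j, ((α j - β j : ℕ) : ℝ) * w j ≤ ∑ j, (α j : ℝ) * w j := by
      refine Finset.sum_le_sum (fun j _ => ?_)
      exact mul_le_mul_of_nonneg_right (by exact_mod_cast Nat.sub_le _ _)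
        (le_of_lt (hpos w hw j))
    refine le_trans h1 ?_
    exact (Finset.sup'_le_iff hA _).mp (hΛ α hα) w hw
  calc ‖∑ α ∈ Λ, (a α * ∏ j, ∏ t ∈ Finset.range (β j), ((α j - t : ℕ) : ℂ)) *
        ∏ k, ((ξ k : ℂ)) ^ (α k - β k)‖
      ≤ ∑ α ∈ Λ, ‖(a α * ∏ j, ∏ t ∈ Finset.range (β j), ((α j - t : ℕ) : ℂ)) *
        ∏ k, ((ξ k : ℂ)) ^ (α k - β k)‖ := norm_sum_le _ _
    _ ≤ ∑ α ∈ Λ, ‖a α * ∏ j, ∏ t ∈ Finset.range (β j), ((α j - t : ℕ) : ℂ)‖ * B :=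
        Finset.sum_le_sum hbound
    _ = (∑ α ∈ Λ, ‖a α * ∏ j, ∏ t ∈ Finset.range (β j), ((α j - t : ℕ) : ℂ)‖) * B :=
        (Finset.sum_mul _ _ _).symm
    _ ≤ (∑ α ∈ Λ, ‖a α * ∏ j, ∏ t ∈ Finset.range (β j), ((α j - t : ℕ) : ℂ)‖) *
        (C * ‖polyP n Λ a ξ‖) := by
        refine mul_le_mul_of_nonneg_left hWP ?_
        exact Finset.sum_nonneg fun α _ => norm_nonneg _
    _ ≤ ((∑ α ∈ Λ, ‖a α * ∏ j, ∏ t ∈ Finset.range (β j), ((α j - t : ℕ) : ℂ)‖) * C + 1) *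
        ‖polyP n Λ a ξ‖ := by
        rw [add_mul, one_mul, mul_assoc]
        exact le_add_of_nonneg_right (norm_nonneg _)
end
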